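/- Let {x_k} ⊂ X with x_k ≥ 0 for all k, and let S ⊆ ℕ be infinite such that x_k → x* along k ∈ S for some x* ∈ X with x* ≥ 0 and c(x*) = 0. Assume (i) −∇f(x*) = ∇c(x*) y − I_{A(x*)}ᵀ z_{A(x*)} for some y ∈ ℝᵐ and z_{A(x*)} ∈ ℝ^{|A(x*)|} with every component of z_{A(x*)} strictly positive, and (ii) the block matrix [∇c(x*)ᵀ; I_{A(x*)}] ∈ ℝ^{(m+|A(x*)|)×n} has full row rank. Fix μ > 0 and a symmetric positive definite H ∈ ℝ^{n×n}; for each k let (u_k,w_k) be the unique optimal solution of subproblem (V) at x_k, v_k := u_k + ∇c(x_k) w_k, and let d_k be the unique optimal solution of: minimize ∇f(x_k)ᵀd + (1/2)dᵀHd over d ∈ ℝⁿ subject to ∇c(x_k)ᵀd = ∇c(x_k)ᵀv_k and x_k + d ≥ 0. Then x* is a KKT point (there exist y ∈ ℝᵐ, z ∈ ℝⁿ with ∇f(x*) + ∇c(x*) y − z = 0, c(x*) = 0, and 0 ≤ x* ⊥ z ≥ 0) if and only if ‖d_k‖² → 0 along k ∈ S. -/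

import Mathlib

open Matrix

/-- Euclidean norm of a vector in `ℝᵏ` (represented as `Fin k → ℝ`). -/
noncomputable def nrm2 {k : ℕ} (a : Fin k → ℝ) : ℝ := Real.sqrt (∑ i, (a i) ^ 2)

/-- Feasibility for subproblem (V): `Gᵀu = 0` and `x + u + Gw ≥ 0`. -/
def feasV {n m : ℕ} (G : Matrix (Fin n) (Fin m) ℝ) (x : Fin n → ℝ)
    (p : (Fin n → ℝ) × (Fin m → ℝ)) : Prop :=
  Gᵀ *ᵥ p.1 = 0 ∧ 0 ≤ x + p.1 + G *ᵥ p.2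

/-- Objective of subproblem (V): `(1/2)‖b + GᵀG w‖² + (1/2)μ‖u‖²`. -/
noncomputable def objV {n m : ℕ} (G : Matrix (Fin n) (Fin m) ℝ) (b : Fin m → ℝ) (μ : ℝ)
    (p : (Fin n → ℝ) × (Fin m → ℝ)) : ℝ :=
  (1 / 2) * nrm2 (b + Gᵀ *ᵥ (G *ᵥ p.2)) ^ 2 + (1 / 2) * μ * nrm2 p.1 ^ 2

open Filter

section TDSMhelpers
variable {α : Type*} {l : Filter α}

lemma TDSM.dotSelf_nonneg {k : ℕ} (a : Fin k → ℝ) : 0 ≤ a ⬝ᵥ a :=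
  Finset.sum_nonneg fun _ _ => mul_self_nonneg _

lemma TDSM.nrm2_sq {k : ℕ} (a : Fin k → ℝ) : nrm2 a ^ 2 = a ⬝ᵥ a := by
  rw [nrm2, Real.sq_sqrt (Finset.sum_nonneg fun i _ => sq_nonneg _)]
  simp [dotProduct, sq]

lemma TDSM.cross_bound {k : ℕ} (a b : Fin k → ℝ) (t : ℝ) :
    2 * t * (a ⬝ᵥ b) ≤ a ⬝ᵥ a + t ^ 2 * (b ⬝ᵥ b) := by
  have h0 : 0 ≤ (a - t • b) ⬝ᵥ (a - t • b) := TDSM.dotSelf_nonneg _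
  have expand : (a - t • b) ⬝ᵥ (a - t • b)
      = a ⬝ᵥ a - 2 * t * (a ⬝ᵥ b) + t ^ 2 * (b ⬝ᵥ b) := by
    simp [sub_dotProduct, dotProduct_sub, smul_dotProduct, dotProduct_smul,
      dotProduct_comm b a, smul_eq_mul]
    ring
  linarith [expand ▸ h0]

lemma TDSM.cross_bound2 {k : ℕ} (a b : Fin k → ℝ) (lam : ℝ) :
    lam * (a ⬝ᵥ b) ≤ 2 * (a ⬝ᵥ a) + (lam ^ 2 / 8) * (b ⬝ᵥ b) := by
  nlinarith [TDSM.cross_bound a b (lam / 4)]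

lemma TDSM.tendsto_dotP {p : ℕ} {a b : α → Fin p → ℝ} {a0 b0 : Fin p → ℝ}
    (ha : Tendsto a l (nhds a0)) (hb : Tendsto b l (nhds b0)) :
    Tendsto (fun t => a t ⬝ᵥ b t) l (nhds (a0 ⬝ᵥ b0)) := by
  simp only [dotProduct]
  exact tendsto_finset_sum _ fun i _ =>
    ((tendsto_pi_nhds.mp ha i).mul (tendsto_pi_nhds.mp hb i))

lemma TDSM.tendsto_mulV {p q : ℕ} {A : α → Matrix (Fin p) (Fin q) ℝ} {v : α → Fin q → ℝ}
    {A0 : Matrix (Fin p) (Fin q) ℝ} {v0 : Fin q → ℝ}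
    (hA : Tendsto A l (nhds A0)) (hv : Tendsto v l (nhds v0)) :
    Tendsto (fun t => A t *ᵥ v t) l (nhds (A0 *ᵥ v0)) := by
  rw [tendsto_pi_nhds]
  intro i
  simp only [Matrix.mulVec, dotProduct]
  exact tendsto_finset_sum _ fun j _ =>
    ((tendsto_pi_nhds.mp (tendsto_pi_nhds.mp hA i) j).mul (tendsto_pi_nhds.mp hv j))

lemma TDSM.tendsto_zero_of_dot {p : ℕ} {a : α → Fin p → ℝ}
    (h : Tendsto (fun t => a t ⬝ᵥ a t) l (nhds 0)) : Tendsto a l (nhds 0) := by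
  rw [tendsto_pi_nhds]
  intro i
  have hsq : Tendsto (fun t => a t i * a t i) l (nhds 0) :=
    squeeze_zero (fun t => mul_self_nonneg _)
      (fun t => Finset.single_le_sum (f := fun j => a t j * a t j)
        (fun j _ => mul_self_nonneg _) (Finset.mem_univ i)) h
  have habs : Tendsto (fun t => |a t i|) l (nhds 0) := by
    have := (Real.continuous_sqrt.tendsto 0).comp hsq
    simpa [Function.comp_def, Real.sqrt_mul_self_eq_abs, Real.sqrt_zero] using this
  simpa using tendsto_zero_iff_abs_tendsto_zero _ |>.mpr habs

lemma TDSM.mulV_dot {p q : ℕ} (A : Matrix (Fin p) (Fin q) ℝ) (y : Fin q → ℝ) (d : Fin p → ℝ) :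
    (A *ᵥ y) ⬝ᵥ d = y ⬝ᵥ (Aᵀ *ᵥ d) := by
  simp only [dotProduct, Matrix.mulVec, Matrix.transpose_apply,
    Finset.sum_mul, Finset.mul_sum]
  rw [Finset.sum_comm]
  exact Finset.sum_congr rfl fun j _ => Finset.sum_congr rfl fun i _ => by ring

lemma TDSM.dot_eq_zero {k : ℕ} {a : Fin k → ℝ} (h : a ⬝ᵥ a = 0) : a = 0 := by
  funext i
  have h0 : ∑ j, a j * a j = 0 := by simpa [dotProduct] using h
  have := (Finset.sum_eq_zero_iff_of_nonneg
    (fun j _ => mul_self_nonneg (a j))).mp h0 i (Finset.mem_univ i)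
  simpa using mul_self_eq_zero.mp this

lemma TDSM.posdef_lambda {k : ℕ} (H : Matrix (Fin k) (Fin k) ℝ) (hH : H.PosDef) :
    ∃ lam : ℝ, 0 < lam ∧ ∀ d : Fin k → ℝ, lam * (d ⬝ᵥ d) ≤ d ⬝ᵥ (H *ᵥ d) := by
  have hpos : ∀ d : Fin k → ℝ, d ≠ 0 → 0 < d ⬝ᵥ (H *ᵥ d) := by
    intro d hd
    simpa using hH.dotProduct_mulVec_pos hd
  rcases isEmpty_or_nonempty (Fin k) with hk | hk
  · exact ⟨1, one_pos, fun d => by simp [dotProduct]⟩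
  · set K : Set (Fin k → ℝ) := {d | d ⬝ᵥ d = 1} with hK
    have hg : Continuous fun d : Fin k → ℝ => d ⬝ᵥ (H *ᵥ d) :=
      continuous_id.dotProduct (continuous_const.matrix_mulVec continuous_id)
    have hKc : IsCompact K := by
      apply Metric.isCompact_of_isClosed_isBounded
      · exact isClosed_eq (continuous_id.dotProduct continuous_id) continuous_const
      · rw [Metric.isBounded_iff_subset_closedBall 0]
        refine ⟨1, fun d hd => ?_⟩
        rw [Metric.mem_closedBall, dist_zero_right]
        rw [pi_norm_le_iff_of_nonneg (by norm_num)]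
        intro i
        have h1 : d i * d i ≤ 1 := by
          rw [← hd]
          exact Finset.single_le_sum (f := fun j => d j * d j)
            (fun j _ => mul_self_nonneg _) (Finset.mem_univ i)
        rw [Real.norm_eq_abs, abs_le]
        constructor <;> nlinarith
    have hKne : K.Nonempty := by
      refine ⟨Pi.single hk.some 1, ?_⟩
      simp [hK, dotProduct, Pi.single_apply]
    obtain ⟨d0, hd0K, hmin⟩ := hKc.exists_isMinOn hKne hg.continuousOn
    have hd0 : d0 ≠ 0 := by
      intro h
      rw [h] at hd0K
      simp [hK, dotProduct] at hd0K
    refine ⟨d0 ⬝ᵥ (H *ᵥ d0), hpos d0 hd0, fun d => ?_⟩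
    by_cases hd : d = 0
    · simp [hd]
    · have hs : 0 < d ⬝ᵥ d := by
        rcases lt_or_eq_of_le (TDSM.dotSelf_nonneg d) with h | h
        · exact h
        · exact absurd (TDSM.dot_eq_zero h.symm) hd
      set t : ℝ := Real.sqrt (d ⬝ᵥ d) with htdef
      have ht : 0 < t := Real.sqrt_pos.mpr hs
      have ht2 : t ^ 2 = d ⬝ᵥ d := Real.sq_sqrt (le_of_lt hs)
      have he : (t⁻¹ • d) ∈ K := by
        simp only [hK, Set.mem_setOf_eq, smul_dotProduct, dotProduct_smul, smul_eq_mul]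
        field_simp
        rw [← ht2]
      have hle : d0 ⬝ᵥ (H *ᵥ d0) ≤ (t⁻¹ • d) ⬝ᵥ (H *ᵥ (t⁻¹ • d)) := hmin he
      have heval : (t⁻¹ • d) ⬝ᵥ (H *ᵥ (t⁻¹ • d)) = t⁻¹ * (t⁻¹ * (d ⬝ᵥ (H *ᵥ d))) := by
        rw [Matrix.mulVec_smul]
        simp [smul_dotProduct, dotProduct_smul, smul_eq_mul]
      rw [heval] at hle
      have h' : (d0 ⬝ᵥ (H *ᵥ d0)) * t ^ 2 ≤ d ⬝ᵥ (H *ᵥ d) := by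
        rw [sq]
        calc d0 ⬝ᵥ (H *ᵥ d0) * (t * t) = (t * t) * (d0 ⬝ᵥ (H *ᵥ d0)) := by ring
          _ ≤ (t * t) * (t⁻¹ * (t⁻¹ * (d ⬝ᵥ (H *ᵥ d)))) :=
              mul_le_mul_of_nonneg_left hle (le_of_lt (mul_pos ht ht))
          _ = d ⬝ᵥ (H *ᵥ d) := by field_simp
      calc (d0 ⬝ᵥ (H *ᵥ d0)) * (d ⬝ᵥ d) = (d0 ⬝ᵥ (H *ᵥ d0)) * t ^ 2 := by rw [ht2]
        _ ≤ d ⬝ᵥ (H *ᵥ d) := h'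

lemma TDSM.final_ineq (lam N Q E F zd ed fd yr zx dH gd : ℝ)
    (h1 : gd + (1/2) * dH ≤ Q) (h2 : lam * N ≤ dH)
    (h3 : gd = zd - fd - yr - ed)
    (h4 : lam * ed ≤ 2 * E + (lam^2/8) * N) (h5 : lam * fd ≤ 2 * F + (lam^2/8) * N)
    (h6 : -zd ≤ zx) (hlam : 0 < lam) :
    N ≤ (2/lam) * (2 * Q + (4/lam) * (E + F) + 2 * zx + 2 * yr) := by
  have hs1 : lam * N ≤ 2*Q - 2*zd + 2*fd + 2*yr + 2*ed := by linarith
  have hkey : (lam^2/2) * N ≤ lam*(2*Q + 2*zx + 2*yr) + 4*E + 4*F := by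
    nlinarith [mul_le_mul_of_nonneg_left hs1 hlam.le, mul_le_mul_of_nonneg_left h6 hlam.le, h4, h5]
  refine (mul_le_mul_iff_right₀ (show (0:ℝ) < lam^2/2 by positivity)).mp ?_
  calc (lam^2/2) * N ≤ lam*(2*Q + 2*zx + 2*yr) + 4*E + 4*F := hkey
    _ = (lam^2/2) * ((2/lam) * (2*Q + (4/lam)*(E+F) + 2*zx + 2*yr)) := by field_simp; ring

end TDSMhelpers

/-- Stationarity measure given by the SQP subproblem with exact gradients: under the
stated regularity conditions at a feasible limit point `x*` of a subsequence
`{x_k}_{k ∈ S}` of nonnegative points, `x*` is a KKT point if and only if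
`‖d_k‖² → 0` along `k ∈ S`. -/
theorem tangential_direction_stationarity_measure
    {n m : ℕ} (X : Set (Fin n → ℝ)) (hXopen : IsOpen X) (hXconv : Convex ℝ X)
    (f : (Fin n → ℝ) → ℝ) (gf : (Fin n → ℝ) → (Fin n → ℝ))
    (hf : ∀ y ∈ X, DifferentiableAt ℝ f y ∧ ∀ h, fderiv ℝ f y h = gf y ⬝ᵥ h)
    (hgfcont : ContinuousOn gf X)
    (c : (Fin n → ℝ) → (Fin m → ℝ))
    (Gc : (Fin n → ℝ) → Matrix (Fin n) (Fin m) ℝ)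
    (hc : ∀ y ∈ X, HasFDerivAt c (LinearMap.toContinuousLinearMap ((Gc y)ᵀ).mulVecLin) y)
    (hGccont : ContinuousOn Gc X)
    (hrank : ∀ y ∈ X, Function.Injective (Gc y).mulVec)
    (xk : ℕ → (Fin n → ℝ)) (hxkX : ∀ k, xk k ∈ X) (hxk0 : ∀ k, 0 ≤ xk k)
    (S : Set ℕ) (hS : S.Infinite)
    (xstar : Fin n → ℝ) (hxstarX : xstar ∈ X) (hxstar0 : 0 ≤ xstar)
    (hcstar : c xstar = 0)
    (hconv : Tendsto xk (atTop ⊓ Filter.principal S) (nhds xstar))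
    -- (i): `−∇f(x*) = ∇c(x*)y − I_{A(x*)}ᵀ z_{A(x*)}` with `z_{A(x*)} > 0` componentwise
    (hi : ∃ (y : Fin m → ℝ) (z : Fin n → ℝ),
        (∀ i, (xstar i = 0 → 0 < z i) ∧ (xstar i ≠ 0 → z i = 0)) ∧
        -gf xstar = (Gc xstar) *ᵥ y - z)
    -- (ii): `[∇c(x*)ᵀ; I_{A(x*)}]` has full row rank (trivial left null space)
    (hii : ∀ (y : Fin m → ℝ) (z : Fin n → ℝ), (∀ i, xstar i ≠ 0 → z i = 0) →
        (Gc xstar) *ᵥ y + z = 0 → y = 0 ∧ z = 0)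
    (μ : ℝ) (hμ : 0 < μ)
    (H : Matrix (Fin n) (Fin n) ℝ) (hH : H.PosDef)
    (uk : ℕ → (Fin n → ℝ)) (wk : ℕ → (Fin m → ℝ))
    (hfeasV : ∀ k, feasV (Gc (xk k)) (xk k) (uk k, wk k))
    (hoptV : ∀ k, ∀ q, feasV (Gc (xk k)) (xk k) q →
        objV (Gc (xk k)) (c (xk k)) μ (uk k, wk k) ≤ objV (Gc (xk k)) (c (xk k)) μ q)
    (dk : ℕ → (Fin n → ℝ))
    (hfeasD : ∀ k, (Gc (xk k))ᵀ *ᵥ dk k = (Gc (xk k))ᵀ *ᵥ (uk k + (Gc (xk k)) *ᵥ wk k) ∧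
        0 ≤ xk k + dk k)
    (hoptD : ∀ k, ∀ d : Fin n → ℝ,
        (Gc (xk k))ᵀ *ᵥ d = (Gc (xk k))ᵀ *ᵥ (uk k + (Gc (xk k)) *ᵥ wk k) → 0 ≤ xk k + d →
        gf (xk k) ⬝ᵥ dk k + (1 / 2) * (dk k ⬝ᵥ (H *ᵥ dk k)) ≤
          gf (xk k) ⬝ᵥ d + (1 / 2) * (d ⬝ᵥ (H *ᵥ d))) :
    (∃ (y : Fin m → ℝ) (z : Fin n → ℝ), gf xstar + (Gc xstar) *ᵥ y - z = 0 ∧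
        c xstar = 0 ∧ 0 ≤ xstar ∧ 0 ≤ z ∧ ∀ i, xstar i * z i = 0) ↔
      Tendsto (fun k => nrm2 (dk k) ^ 2) (atTop ⊓ Filter.principal S) (nhds 0) := by
  classical
  obtain ⟨y, z, hz, hgrad⟩ := hi
  have hz0 : 0 ≤ z := by
    intro i
    rcases eq_or_ne (xstar i) 0 with h | h
    · exact le_of_lt ((hz i).1 h)
    · exact le_of_eq ((hz i).2 h).symm
  have hgfstar : gf xstar = z - Gc xstar *ᵥ y := by
    have h : gf xstar = -(Gc xstar *ᵥ y - z) := by rw [← hgrad, neg_neg]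
    rw [h, neg_sub]
  have hKKT : ∃ (y : Fin m → ℝ) (z : Fin n → ℝ), gf xstar + (Gc xstar) *ᵥ y - z = 0 ∧
      c xstar = 0 ∧ 0 ≤ xstar ∧ 0 ≤ z ∧ ∀ i, xstar i * z i = 0 := by
    refine ⟨y, z, ?_, hcstar, hxstar0, hz0, fun i => ?_⟩
    · rw [hgfstar]; abel
    · rcases eq_or_ne (xstar i) 0 with h | h
      · rw [h, zero_mul]
      · rw [(hz i).2 h, mul_zero]
  refine iff_of_true hKKT ?_
  set F : Filter ℕ := atTop ⊓ Filter.principal S with hFdef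
  -- basic limits
  have hXnhds : X ∈ nhds xstar := hXopen.mem_nhds hxstarX
  have hGt : Tendsto (fun k => Gc (xk k)) F (nhds (Gc xstar)) :=
    Filter.Tendsto.comp (hGccont.continuousAt hXnhds) hconv
  have hgft : Tendsto (fun k => gf (xk k)) F (nhds (gf xstar)) :=
    Filter.Tendsto.comp (hgfcont.continuousAt hXnhds) hconv
  have hct : Tendsto (fun k => c (xk k)) F (nhds 0) := by
    have h := Filter.Tendsto.comp ((hc xstar hxstarX).differentiableAt.continuousAt) hconv
    rwa [hcstar] at h
  have hCt : Tendsto (fun k => c (xk k) ⬝ᵥ c (xk k)) F (nhds 0) := by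
    simpa using TDSM.tendsto_dotP hct hct
  -- abbreviations
  set r : ℕ → Fin m → ℝ := fun k => (Gc (xk k))ᵀ *ᵥ ((Gc (xk k)) *ᵥ wk k) with hrdef
  set v : ℕ → Fin n → ℝ := fun k => uk k + (Gc (xk k)) *ᵥ wk k with hvdef
  -- key inequality from subproblem (V) against (0,0)
  have hVkey : ∀ k, 2 * (c (xk k) ⬝ᵥ r k) + (r k ⬝ᵥ r k) + μ * (uk k ⬝ᵥ uk k) ≤ 0 := by
    intro k
    have hfeas0 : feasV (Gc (xk k)) (xk k) (0, 0) := by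
      constructor
      · simp [Matrix.mulVec_zero]
      · simpa [Matrix.mulVec_zero] using hxk0 k
    have h := hoptV k (0, 0) hfeas0
    simp only [objV, TDSM.nrm2_sq, Matrix.mulVec_zero, add_zero, zero_dotProduct] at h
    have hexp : (c (xk k) + r k) ⬝ᵥ (c (xk k) + r k)
        = c (xk k) ⬝ᵥ c (xk k) + 2 * (c (xk k) ⬝ᵥ r k) + r k ⬝ᵥ r k := by
      simp only [add_dotProduct, dotProduct_add, dotProduct_comm (r k) (c (xk k))]
      ring
    simp only [hrdef] at hexp ⊢
    rw [hexp] at h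
    linarith
  have hRle : ∀ k, r k ⬝ᵥ r k ≤ 4 * (c (xk k) ⬝ᵥ c (xk k)) := by
    intro k
    have h1 := hVkey k
    have h2 := TDSM.cross_bound (c (xk k)) (-(r k)) (1/2 : ℝ)
    simp only [dotProduct_neg, neg_dotProduct, neg_neg] at h2
    have hu := TDSM.dotSelf_nonneg (uk k)
    nlinarith [mul_nonneg hμ.le hu]
  have hUle : ∀ k, uk k ⬝ᵥ uk k ≤ (2 / μ) * (c (xk k) ⬝ᵥ c (xk k)) := by
    intro k
    have h1 := hVkey k
    have h2 := TDSM.cross_bound (c (xk k)) (-(r k)) (1/2 : ℝ)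
    simp only [dotProduct_neg, neg_dotProduct, neg_neg] at h2
    have hR := TDSM.dotSelf_nonneg (r k)
    rw [div_mul_eq_mul_div, le_div_iff₀ hμ]
    nlinarith
  have hRt : Tendsto (fun k => r k ⬝ᵥ r k) F (nhds 0) :=
    squeeze_zero (fun k => TDSM.dotSelf_nonneg _) hRle (by simpa using hCt.const_mul 4)
  have hrt : Tendsto r F (nhds 0) := TDSM.tendsto_zero_of_dot hRt
  have hut : Tendsto uk F (nhds 0) :=
    TDSM.tendsto_zero_of_dot
      (squeeze_zero (fun k => TDSM.dotSelf_nonneg _) hUle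
        (by simpa using hCt.const_mul (2 / μ)))
  -- wk → 0 via inverse of normal matrix
  have hdet_ne : ∀ x0 ∈ X, ((Gc x0)ᵀ * Gc x0).det ≠ 0 := by
    intro x0 hx0 hdet
    obtain ⟨w0, hw0ne, hw0⟩ := (Matrix.exists_mulVec_eq_zero_iff).mpr hdet
    have h2 : (Gc x0)ᵀ *ᵥ (Gc x0 *ᵥ w0) = 0 := by
      rw [Matrix.mulVec_mulVec]; exact hw0
    have h1 : (Gc x0 *ᵥ w0) ⬝ᵥ (Gc x0 *ᵥ w0) = 0 := by
      rw [TDSM.mulV_dot, h2, dotProduct_zero]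
    have hGw : Gc x0 *ᵥ w0 = 0 := TDSM.dot_eq_zero h1
    exact hw0ne (hrank x0 hx0 (show (Gc x0).mulVec w0 = (Gc x0).mulVec 0 by
      simp [hGw, Matrix.mulVec_zero]))
  set M : ℕ → Matrix (Fin m) (Fin m) ℝ := fun k => (Gc (xk k))ᵀ * (Gc (xk k)) with hMdef
  have hMt : Tendsto M F (nhds ((Gc xstar)ᵀ * Gc xstar)) := by
    have hcont : Continuous fun A : Matrix (Fin n) (Fin m) ℝ => Aᵀ * A :=
      (continuous_id.matrix_transpose).matrix_mul continuous_id
    exact (hcont.tendsto _).comp hGt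
  have hMinvt : Tendsto (fun k => (M k)⁻¹) F (nhds ((Gc xstar)ᵀ * Gc xstar)⁻¹) := by
    have hcA : ContinuousAt (fun A : Matrix (Fin m) (Fin m) ℝ => A⁻¹)
        ((Gc xstar)ᵀ * Gc xstar) := by
      have heq : (fun A : Matrix (Fin m) (Fin m) ℝ => A⁻¹)
          = fun A => (A.det)⁻¹ • A.adjugate := by
        funext A; rw [Matrix.inv_def, Ring.inverse_eq_inv]
      rw [heq]
      exact ContinuousAt.smul
        ((continuousAt_inv₀ (hdet_ne xstar hxstarX)).comp
          (continuous_id.matrix_det).continuousAt)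
        (continuous_id.matrix_adjugate).continuousAt
    exact Filter.Tendsto.comp hcA hMt
  have hwt : Tendsto wk F (nhds 0) := by
    have heq : ∀ k, wk k = (M k)⁻¹ *ᵥ r k := by
      intro k
      have hrk : r k = M k *ᵥ wk k := by
        simp only [hrdef, hMdef]
        exact Matrix.mulVec_mulVec _ _ _
      rw [hrk, Matrix.mulVec_mulVec,
        Matrix.nonsing_inv_mul _ (isUnit_iff_ne_zero.mpr (hdet_ne _ (hxkX k))),
        Matrix.one_mulVec]
    have h := TDSM.tendsto_mulV hMinvt hrt
    rw [Matrix.mulVec_zero] at h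
    exact Tendsto.congr (fun k => (heq k).symm) h
  have hvt : Tendsto v F (nhds 0) := by
    have h := hut.add (TDSM.tendsto_mulV hGt hwt)
    simpa [hvdef, Matrix.mulVec_zero] using h
  -- Q
  set Q : ℕ → ℝ := fun k => gf (xk k) ⬝ᵥ v k + (1/2) * (v k ⬝ᵥ (H *ᵥ v k)) with hQdef
  have hQt : Tendsto Q F (nhds 0) := by
    have h1 := TDSM.tendsto_dotP hgft hvt
    have h2 := TDSM.tendsto_dotP hvt (TDSM.tendsto_mulV (tendsto_const_nhds (x := H)) hvt)
    have h := h1.add (h2.const_mul (1/2 : ℝ))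
    simpa [hQdef, Matrix.mulVec_zero, mul_comm] using h
  obtain ⟨lam, hlam, hlamle⟩ := TDSM.posdef_lambda H hH
  -- auxiliary scalar limits
  have hEt : Tendsto (fun k => (gf xstar - gf (xk k)) ⬝ᵥ (gf xstar - gf (xk k))) F (nhds 0) := by
    have h := TDSM.tendsto_dotP ((tendsto_const_nhds (x := gf xstar)).sub hgft) ((tendsto_const_nhds (x := gf xstar)).sub hgft)
    simpa using h
  have hFt : Tendsto (fun k => ((Gc xstar - Gc (xk k)) *ᵥ y) ⬝ᵥ ((Gc xstar - Gc (xk k)) *ᵥ y))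
      F (nhds 0) := by
    have hA : Tendsto (fun k => (Gc xstar - Gc (xk k)) *ᵥ y) F (nhds 0) := by
      have h := TDSM.tendsto_mulV ((tendsto_const_nhds (x := Gc xstar)).sub hGt)
        (tendsto_const_nhds (x := y))
      simpa [Matrix.zero_mulVec] using h
    simpa using TDSM.tendsto_dotP hA hA
  have hZXt : Tendsto (fun k => z ⬝ᵥ xk k) F (nhds 0) := by
    have h := TDSM.tendsto_dotP (tendsto_const_nhds (x := z)) hconv
    have hzx : z ⬝ᵥ xstar = 0 := Finset.sum_eq_zero fun i _ => by
      rcases eq_or_ne (xstar i) 0 with hh | hh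
      · rw [hh, mul_zero]
      · rw [(hz i).2 hh, zero_mul]
    rwa [hzx] at h
  have hYRt : Tendsto (fun k => y ⬝ᵥ r k) F (nhds 0) := by
    simpa using TDSM.tendsto_dotP (tendsto_const_nhds (x := y)) hrt
  set B : ℕ → ℝ := fun k => 2 * Q k
      + (4 / lam) * ((gf xstar - gf (xk k)) ⬝ᵥ (gf xstar - gf (xk k))
          + ((Gc xstar - Gc (xk k)) *ᵥ y) ⬝ᵥ ((Gc xstar - Gc (xk k)) *ᵥ y))
      + 2 * (z ⬝ᵥ xk k) + 2 * (y ⬝ᵥ r k) with hBdef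
  have hBt : Tendsto B F (nhds 0) := by
    have h := (((hQt.const_mul 2).add ((hEt.add hFt).const_mul (4 / lam))).add
      (hZXt.const_mul 2)).add (hYRt.const_mul 2)
    have h0 : 2 * (0:ℝ) + 4 / lam * (0 + 0) + 2 * 0 + 2 * 0 = 0 := by norm_num
    rw [h0] at h
    exact h
  -- pointwise bound
  have hpoint : ∀ k, nrm2 (dk k) ^ 2 ≤ (2 / lam) * B k := by
    intro k
    rw [TDSM.nrm2_sq]
    have hG1 : (Gc (xk k))ᵀ *ᵥ uk k = 0 := (hfeasV k).1
    have hGtd : (Gc (xk k))ᵀ *ᵥ dk k = r k := by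
      rw [(hfeasD k).1, Matrix.mulVec_add, hG1, zero_add]
    have hvfeas : 0 ≤ xk k + v k := by
      have h := (hfeasV k).2
      simp only [hvdef]
      rw [← add_assoc]
      exact h
    have hopt := hoptD k (v k) (by simp only [hvdef]) (hvfeas)
    have hQk : gf (xk k) ⬝ᵥ v k + (1/2) * (v k ⬝ᵥ (H *ᵥ v k)) = Q k := by
      simp only [hQdef]
    have hopt' : gf (xk k) ⬝ᵥ dk k + (1/2) * (dk k ⬝ᵥ (H *ᵥ dk k)) ≤ Q k := by
      rw [← hQk]
      simpa only [hvdef] using hopt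
    have hlam1 := hlamle (dk k)
    have hGstar_dk : (Gc xstar *ᵥ y) ⬝ᵥ dk k
        = ((Gc xstar - Gc (xk k)) *ᵥ y) ⬝ᵥ dk k + y ⬝ᵥ r k := by
      rw [Matrix.sub_mulVec, sub_dotProduct, TDSM.mulV_dot (Gc (xk k)) y (dk k), hGtd]
      ring
    have hdecomp : gf (xk k) ⬝ᵥ dk k = z ⬝ᵥ dk k
        - ((Gc xstar - Gc (xk k)) *ᵥ y) ⬝ᵥ dk k - y ⬝ᵥ r k
        - (gf xstar - gf (xk k)) ⬝ᵥ dk k := by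
      have hgfk : gf (xk k) = (z - Gc xstar *ᵥ y) - (gf xstar - gf (xk k)) := by
        rw [← hgfstar]; abel
      calc gf (xk k) ⬝ᵥ dk k
          = ((z - Gc xstar *ᵥ y) - (gf xstar - gf (xk k))) ⬝ᵥ dk k := by rw [← hgfk]
        _ = z ⬝ᵥ dk k - (Gc xstar *ᵥ y) ⬝ᵥ dk k - (gf xstar - gf (xk k)) ⬝ᵥ dk k := by
            rw [sub_dotProduct, sub_dotProduct]
        _ = z ⬝ᵥ dk k - ((Gc xstar - Gc (xk k)) *ᵥ y) ⬝ᵥ dk k - y ⬝ᵥ r k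
            - (gf xstar - gf (xk k)) ⬝ᵥ dk k := by rw [hGstar_dk]; ring
    have hcb1 := TDSM.cross_bound2 (gf xstar - gf (xk k)) (dk k) lam
    have hcb2 := TDSM.cross_bound2 ((Gc xstar - Gc (xk k)) *ᵥ y) (dk k) lam
    have hzdk : -(z ⬝ᵥ dk k) ≤ z ⬝ᵥ xk k := by
      have h0 : 0 ≤ z ⬝ᵥ (xk k + dk k) :=
        Finset.sum_nonneg fun i _ => mul_nonneg (hz0 i) ((hfeasD k).2 i)
      rw [dotProduct_add] at h0
      linarith
    have := TDSM.final_ineq lam (dk k ⬝ᵥ dk k) (Q k)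
      ((gf xstar - gf (xk k)) ⬝ᵥ (gf xstar - gf (xk k)))
      (((Gc xstar - Gc (xk k)) *ᵥ y) ⬝ᵥ ((Gc xstar - Gc (xk k)) *ᵥ y))
      (z ⬝ᵥ dk k) ((gf xstar - gf (xk k)) ⬝ᵥ dk k)
      (((Gc xstar - Gc (xk k)) *ᵥ y) ⬝ᵥ dk k) (y ⬝ᵥ r k) (z ⬝ᵥ xk k)
      (dk k ⬝ᵥ (H *ᵥ dk k)) (gf (xk k) ⬝ᵥ dk k)
      hopt' hlam1 hdecomp hcb1 hcb2 hzdk hlam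
    calc dk k ⬝ᵥ dk k ≤ (2/lam) * (2 * Q k
        + (4/lam) * ((gf xstar - gf (xk k)) ⬝ᵥ (gf xstar - gf (xk k))
          + ((Gc xstar - Gc (xk k)) *ᵥ y) ⬝ᵥ ((Gc xstar - Gc (xk k)) *ᵥ y))
        + 2 * (z ⬝ᵥ xk k) + 2 * (y ⬝ᵥ r k)) := this
      _ = (2/lam) * B k := by simp only [hBdef]
  have hBt' : Tendsto (fun k => (2 / lam) * B k) F (nhds 0) := by
    have h := hBt.const_mul (2 / lam)
    rwa [mul_zero] at h
  exact squeeze_zero (fun k => sq_nonneg _) hpoint hBt'
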